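/- Let ℓ ≥ 2 with 2ℓ < n - 3. If the q-ary NMDS linear code C = [n, n-2ℓ-1, 2ℓ+1] has an ℓ-error-correcting pair (A, B) over F_{q^m} with A = [n, ℓ+1, n-ℓ], then exactly one of the following holds: (1) B^⊥ = [n, n-ℓ-1, ℓ+1]; (2) B^⊥ = [n, n-ℓ, ℓ+1] and A*B = [n, 2ℓ, n-2ℓ+1]; (3) B^⊥ = [n, n-ℓ, ℓ+1] and A*B = C^⊥. -/

import Mathlib

open Finset

/-- Hamming weight of a vector. -/
noncomputable def wt {F : Type*} [Zero F] {ι : Type*} (c : ι → F) : ℕ :=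
  Nat.card {i : ι // c i ≠ 0}

/-- `C` has minimum Hamming distance `d`. -/
def hasMinDist {F : Type*} [Field F] {ι : Type*} (C : Submodule F (ι → F)) (d : ℕ) : Prop :=
  (∃ c ∈ C, c ≠ 0 ∧ wt c = d) ∧ ∀ c ∈ C, c ≠ 0 → d ≤ wt c

/-- The dual code with respect to the standard inner product. -/
def dualCode {F : Type*} [Field F] {ι : Type*} [Fintype ι] (C : Submodule F (ι → F)) :
    Submodule F (ι → F) where
  carrier := {x | ∀ c ∈ C, ∑ i, x i * c i = 0}
  add_mem' := by
    intro a b ha hb c hc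
    simp only [Pi.add_apply, add_mul, Finset.sum_add_distrib, ha c hc, hb c hc, add_zero]
  zero_mem' := by intro c hc; simp
  smul_mem' := by
    intro r a ha c hc
    simp only [Pi.smul_apply, smul_eq_mul, mul_assoc, ← Finset.mul_sum, ha c hc, mul_zero]

/-- The Schur (coordinatewise) product code: the span of all coordinatewise products. -/
def schurProd {F : Type*} [Field F] {ι : Type*} (A B : Submodule F (ι → F)) :
    Submodule F (ι → F) :=
  Submodule.span F {x | ∃ a ∈ A, ∃ b ∈ B, x = a * b}

/-- A code is full-support if every coordinate carries a nonzero entry of some codeword. -/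
def fullSupport {F : Type*} [Field F] {ι : Type*} (A : Submodule F (ι → F)) : Prop :=
  ∀ i : ι, ∃ a ∈ A, a i ≠ 0

/-- Extension of scalars of a code from `Fq` to an extension field `K`, componentwise. -/
def extendCode (Fq K : Type*) [Field Fq] [Field K] [Algebra Fq K] {ι : Type*}
    (C : Submodule Fq (ι → Fq)) : Submodule K (ι → K) :=
  Submodule.span K ((fun c (i : ι) => algebraMap Fq K (c i)) '' (C : Set (ι → Fq)))

/-!
Everything is driven by the MDS code `A = [n, ℓ+1, n-ℓ]`: for every set `S` of `ℓ` coordinates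
some `a ∈ A` vanishes exactly on `S`, so every word `u` of weight at most `ℓ+1` has a multiple
`a * u` of weight one. Multiplication by such an `a` is injective on codes of minimum distance
`> ℓ` and lands in the subcode vanishing on `S`, whose dimension drops by exactly `ℓ` when the
dual code has no nonzero word supported in `S`. Counting dimensions this way, `A * B ⊆ C^⊥`
forces `d(B) ≥ ℓ+2` and `dim B ∈ {ℓ, ℓ+1}`, and a minimum-weight word of `C` times a suitable
`a` is a word of weight `ℓ+1` in `B^⊥`. If `dim B = ℓ`, then `B^⊥`, hence `B`, is MDS and
`(A * B)^⊥` has distance `> ℓ`, so `2ℓ ≤ dim (A * B) ≤ 2ℓ+1`; when `dim (A * B) = 2ℓ`, a word of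
`A * B` with `2ℓ` zeros would be `a * b` with `b ∈ B` vanishing on `ℓ` points, which the MDS code
`B` does not allow. Extension of scalars preserves dimension, duality and minimum distance, as one
sees by applying `F_q`-linear functionals `F_{q^m} → F_q` coordinatewise.
-/

open Module

section Weight

variable {F ι : Type*} [Fintype ι]

theorem wt_eq_hammingNorm [Zero F] [DecidableEq F] (c : ι → F) : wt c = hammingNorm c := by
  rw [wt, Nat.card_eq_fintype_card, Fintype.card_subtype]
  rfl

theorem wt_pos_iff [Zero F] {c : ι → F} : 0 < wt c ↔ c ≠ 0 := by
  classical
  rw [wt_eq_hammingNorm, hammingNorm_pos_iff]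

@[simp] theorem wt_zero [Zero F] : wt (0 : ι → F) = 0 := by
  classical
  rw [wt_eq_hammingNorm, hammingNorm_zero]

theorem wt_le_card_of_forall_notMem [Zero F] {c : ι → F} {s : Finset ι}
    (h : ∀ i ∉ s, c i = 0) : wt c ≤ #s := by
  classical
  rw [wt_eq_hammingNorm]
  exact card_le_card fun i hi => by_contra fun his => (mem_filter.1 hi).2 (h i his)

variable [DecidableEq F]

def zeroSet [Zero F] (c : ι → F) : Finset ι := {i | c i = 0}

@[simp] theorem mem_zeroSet [Zero F] {c : ι → F} {i : ι} : i ∈ zeroSet c ↔ c i = 0 := by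
  simp [zeroSet]

theorem card_zeroSet_add_wt [Zero F] (c : ι → F) : #(zeroSet c) + wt c = Fintype.card ι := by
  rw [wt_eq_hammingNorm, hammingNorm, zeroSet]
  exact card_filter_add_card_filter_not _

variable [MulZeroClass F] [NoZeroDivisors F]

theorem wt_le_wt_mul_add_card_zeroSet (a c : ι → F) : wt c ≤ wt (a * c) + #(zeroSet a) := by
  classical
  rw [wt_eq_hammingNorm, wt_eq_hammingNorm]
  refine (card_le_card fun i hi => ?_).trans (card_union_le _ _)
  by_cases ha : a i = 0 <;> simp_all

theorem wt_mul_add_card_zeroSet {a c : ι → F} (h : ∀ i, a i = 0 → c i ≠ 0) :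
    wt (a * c) + #(zeroSet a) = wt c := by
  classical
  rw [wt_eq_hammingNorm, wt_eq_hammingNorm, hammingNorm, hammingNorm, zeroSet,
    ← card_union_of_disjoint]
  · congr 1
    ext i
    by_cases ha : a i = 0 <;> simp_all
  · exact disjoint_filter.2 fun i _ hi ha => hi (by simp [ha])

end Weight

section Vanishing

variable (K : Type*) [Field K] {ι : Type*}

def vanishingOn (S : Finset ι) : Submodule K (ι → K) :=
  LinearMap.ker (LinearMap.funLeft K K ((↑) : S → ι))

variable {K}

theorem mem_vanishingOn {S : Finset ι} {x : ι → K} : x ∈ vanishingOn K S ↔ ∀ i ∈ S, x i = 0 := by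
  simp [vanishingOn, funext_iff]

theorem finrank_vanishingOn_add_card [Fintype ι] (S : Finset ι) :
    finrank K (vanishingOn K S) + #S = Fintype.card ι := by
  have h := (LinearMap.funLeft K K ((↑) : S → ι)).finrank_range_add_finrank_ker
  rw [LinearMap.range_eq_top.2 (LinearMap.funLeft_surjective_of_injective _ _ _
    Subtype.val_injective), finrank_top, finrank_fintype_fun_eq_card, finrank_fintype_fun_eq_card,
    Fintype.card_coe] at h
  rw [vanishingOn]
  omega

end Vanishing

section Duality

variable {K ι : Type*} [Field K] [Fintype ι]

theorem mem_dualCode {U : Submodule K (ι → K)} {x : ι → K} :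
    x ∈ dualCode U ↔ ∀ c ∈ U, ∑ i, x i * c i = 0 :=
  Iff.rfl

theorem dualCode_antitone : Antitone (dualCode : Submodule K (ι → K) → Submodule K (ι → K)) :=
  fun _ _ h _ hx c hc => hx c (h hc)

theorem le_dualCode_dualCode (U : Submodule K (ι → K)) : U ≤ dualCode (dualCode U) :=
  fun x hx c hc => by simpa only [mul_comm] using hc x hx

theorem dualCode_eq_comap_dualAnnihilator [DecidableEq ι] (U : Submodule K (ι → K)) :
    dualCode U = U.dualAnnihilator.comap (dotProductEquiv K ι).toLinearMap := by
  ext x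
  simp [mem_dualCode, Submodule.mem_dualAnnihilator, dotProduct]

theorem finrank_dualCode_add_finrank (U : Submodule K (ι → K)) :
    finrank K (dualCode U) + finrank K U = Fintype.card ι := by
  classical
  rw [dualCode_eq_comap_dualAnnihilator, Submodule.comap_equiv_eq_map_symm,
    LinearEquiv.finrank_map_eq, add_comm, Subspace.finrank_add_finrank_dualAnnihilator_eq,
    finrank_fintype_fun_eq_card]

theorem dualCode_dualCode (U : Submodule K (ι → K)) : dualCode (dualCode U) = U := by
  refine (Submodule.eq_of_le_of_finrank_le (le_dualCode_dualCode U) ?_).symm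
  have := finrank_dualCode_add_finrank U
  have := finrank_dualCode_add_finrank (dualCode U)
  omega

theorem span_le_dualCode_span {s t : Set (ι → K)} (h : ∀ x ∈ s, ∀ c ∈ t, ∑ i, x i * c i = 0) :
    Submodule.span K s ≤ dualCode (Submodule.span K t) := by
  refine Submodule.span_le.2 fun x hx c hc => ?_
  induction hc using Submodule.span_induction with
  | mem c hc => exact h x hx c hc
  | zero => simp
  | add c d _ _ hc hd => simp [mul_add, sum_add_distrib, hc, hd]
  | smul r c _ hc => simp [mul_left_comm _ r, ← mul_sum, hc]

end Duality

section Extension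

variable {Fq K ι : Type*} [Field Fq] [Field K] [Algebra Fq K] {C : Submodule Fq (ι → Fq)}

theorem algebraMap_comp_mem_extendCode {c : ι → Fq} (hc : c ∈ C) :
    (fun i => algebraMap Fq K (c i)) ∈ extendCode Fq K C :=
  Submodule.subset_span ⟨c, hc, rfl⟩

theorem dual_comp_mem_of_mem_extendCode {y : ι → K} (hy : y ∈ extendCode Fq K C)
    (φ : Module.Dual Fq K) : (fun i => φ (y i)) ∈ C := by
  induction hy using Submodule.span_induction generalizing φ with
  | mem y hy =>
    obtain ⟨c, hc, rfl⟩ := hy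
    convert C.smul_mem (φ 1) hc using 1
    ext i
    simp [Algebra.algebraMap_eq_smul_one, mul_comm]
  | zero => simp only [Pi.zero_apply, map_zero]; exact C.zero_mem
  | add y z _ _ hy hz => simp only [Pi.add_apply, map_add]; exact C.add_mem (hy φ) (hz φ)
  | smul k y _ hy => exact hy (φ ∘ₗ LinearMap.mulLeft Fq k)

theorem exists_mem_ne_zero_wt_le_of_mem_extendCode [Fintype ι] {y : ι → K}
    (hy : y ∈ extendCode Fq K C) (hy0 : y ≠ 0) : ∃ c ∈ C, c ≠ 0 ∧ wt c ≤ wt y := by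
  classical
  obtain ⟨i, hi⟩ := Function.ne_iff.1 hy0
  obtain ⟨φ, hφ⟩ : ∃ φ : Module.Dual Fq K, φ (y i) ≠ 0 := by
    by_contra! h
    exact hi ((Module.forall_dual_apply_eq_zero_iff Fq _).1 h)
  refine ⟨_, dual_comp_mem_of_mem_extendCode hy φ, fun h => hφ (congrFun h i), ?_⟩
  rw [wt_eq_hammingNorm, wt_eq_hammingNorm]
  exact hammingNorm_comp_le_hammingNorm (fun _ => φ) fun _ => map_zero φ

theorem hasMinDist_extendCode [Fintype ι] {d : ℕ} (hC : hasMinDist C d) :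
    hasMinDist (extendCode Fq K C) d := by
  classical
  obtain ⟨⟨c, hc, hc0, hcd⟩, hd⟩ := hC
  refine ⟨⟨_, algebraMap_comp_mem_extendCode hc, fun h => hc0 ?_, ?_⟩, fun y hy hy0 => ?_⟩
  · ext i
    simpa using congrFun h i
  · rw [wt_eq_hammingNorm, hammingNorm_comp _ (fun _ => (algebraMap Fq K).injective) fun _ =>
      map_zero _, ← wt_eq_hammingNorm, hcd]
  · obtain ⟨c, hc, hc0, hcy⟩ := exists_mem_ne_zero_wt_le_of_mem_extendCode hy hy0
    exact (hd c hc hc0).trans hcy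

theorem LinearIndependent.algebraMap_comp {κ : Type*} {g : κ → ι → Fq}
    (hg : LinearIndependent Fq g) :
    LinearIndependent K (fun j i => algebraMap Fq K (g j i)) := by
  rw [linearIndependent_iff'] at hg ⊢
  intro s κc hsum j hj
  by_contra hne
  obtain ⟨φ, hφ⟩ : ∃ φ : Module.Dual Fq K, φ (κc j) ≠ 0 := by
    by_contra! h
    exact hne ((Module.forall_dual_apply_eq_zero_iff Fq _).1 h)
  refine hφ (hg s (fun j => φ (κc j)) ?_ j hj)
  ext t
  have := congrArg φ (congrFun hsum t)
  simpa [map_sum, ← Algebra.commutes, ← Algebra.smul_def, mul_comm (φ _)] using this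

theorem extendCode_span (s : Set (ι → Fq)) :
    extendCode Fq K (Submodule.span Fq s) =
      Submodule.span K ((fun c i => algebraMap Fq K (c i)) '' s) := by
  have : (fun (c : ι → Fq) i => algebraMap Fq K (c i)) =
      LinearMap.compLeft (Algebra.linearMap Fq K) ι := rfl
  rw [extendCode, this, ← Submodule.map_coe, Submodule.map_span, Submodule.span_span_of_tower]

theorem finrank_extendCode [Fintype ι] (C : Submodule Fq (ι → Fq)) :
    finrank K (extendCode Fq K C) = finrank Fq C := by
  let b := Module.finBasis Fq C
  have hC : C = Submodule.span Fq (Set.range (C.subtype ∘ b)) := by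
    rw [Set.range_comp, ← Submodule.map_span, b.span_eq, Submodule.map_subtype_top]
  conv_lhs => rw [hC, extendCode_span, ← Set.range_comp]
  exact (finrank_span_eq_card (b.linearIndependent.map' _ C.ker_subtype).algebraMap_comp).trans
    (Fintype.card_fin _)

theorem extendCode_dualCode_le [Fintype ι] (C : Submodule Fq (ι → Fq)) :
    extendCode Fq K (dualCode C) ≤ dualCode (extendCode Fq K C) := by
  refine span_le_dualCode_span ?_
  rintro _ ⟨y, hy, rfl⟩ _ ⟨c, hc, rfl⟩
  simp only [← map_mul, ← map_sum, hy c hc, map_zero]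

theorem dualCode_extendCode [Fintype ι] (C : Submodule Fq (ι → Fq)) :
    dualCode (extendCode Fq K C) = extendCode Fq K (dualCode C) := by
  refine (Submodule.eq_of_le_of_finrank_le (extendCode_dualCode_le C) ?_).symm
  have := finrank_dualCode_add_finrank (extendCode Fq K C)
  have := finrank_dualCode_add_finrank C
  rw [finrank_extendCode] at *
  omega

end Extension

section Shortening

variable {K ι : Type*} [Field K] [Fintype ι]

theorem wt_add_card_le_of_mem_vanishingOn {S : Finset ι} {x : ι → K}
    (hx : x ∈ vanishingOn K S) : wt x + #S ≤ Fintype.card ι := by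
  classical
  have hS : S ⊆ zeroSet x := fun i hi => mem_zeroSet.2 (mem_vanishingOn.1 hx i hi)
  have := card_le_card hS
  have := card_zeroSet_add_wt x
  omega

theorem finrank_le_finrank_inf_vanishingOn_add_card (U : Submodule K (ι → K)) (S : Finset ι) :
    finrank K U ≤ finrank K ↥(U ⊓ vanishingOn K S) + #S := by
  have := Submodule.finrank_sup_add_finrank_inf_eq U (vanishingOn K S)
  have := (U ⊔ vanishingOn K S).finrank_le
  have := finrank_vanishingOn_add_card (K := K) S
  rw [finrank_fintype_fun_eq_card] at *
  omega

theorem exists_mem_ne_zero_vanishingOn {U : Submodule K (ι → K)} {S : Finset ι}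
    (h : #S < finrank K U) : ∃ x ∈ U, x ≠ 0 ∧ x ∈ vanishingOn K S := by
  have := finrank_le_finrank_inf_vanishingOn_add_card U S
  have hne : U ⊓ vanishingOn K S ≠ ⊥ := fun h0 => by rw [h0, finrank_bot] at this; omega
  obtain ⟨x, ⟨hxU, hxS⟩, hx0⟩ := Submodule.exists_mem_ne_zero_of_ne_bot hne
  exact ⟨x, hxU, hx0, hxS⟩

theorem finrank_inf_vanishingOn_add_card {U : Submodule K (ι → K)} {S : Finset ι}
    (hU : ∀ y ∈ dualCode U, y ≠ 0 → #S < wt y) :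
    finrank K ↥(U ⊓ vanishingOn K S) + #S = finrank K U := by
  classical
  refine le_antisymm ?_ (finrank_le_finrank_inf_vanishingOn_add_card U S)
  -- `dualCode U` and the words supported in `S` form a direct sum inside the dual of the subcode.
  have hdisj : dualCode U ⊓ vanishingOn K Sᶜ = ⊥ := by
    refine (Submodule.eq_bot_iff _).2 fun y ⟨hy, hyS⟩ => by_contra fun hy0 => ?_
    have := wt_le_card_of_forall_notMem fun i hi => mem_vanishingOn.1 hyS i (mem_compl.2 hi)
    exact (hU y hy hy0).not_ge this
  have hle : dualCode U ⊔ vanishingOn K Sᶜ ≤ dualCode (U ⊓ vanishingOn K S) :=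
    sup_le (dualCode_antitone inf_le_left) fun x hx c hc => sum_eq_zero fun i _ => by
      by_cases hi : i ∈ S
      · rw [mem_vanishingOn.1 (Submodule.mem_inf.1 hc).2 i hi, mul_zero]
      · rw [mem_vanishingOn.1 hx i (mem_compl.2 hi), zero_mul]
  have := Submodule.finrank_sup_add_finrank_inf_eq (dualCode U) (vanishingOn K Sᶜ)
  have := Submodule.finrank_mono hle
  have := finrank_dualCode_add_finrank U
  have := finrank_dualCode_add_finrank (U ⊓ vanishingOn K S)
  have := finrank_vanishingOn_add_card (K := K) Sᶜ
  have := card_le_univ S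
  rw [hdisj, finrank_bot, card_compl] at *
  omega

theorem exists_ne_zero_wt_add_finrank_le {U : Submodule K (ι → K)} (hU : U ≠ ⊥) :
    ∃ x ∈ U, x ≠ 0 ∧ wt x + finrank K U ≤ Fintype.card ι + 1 := by
  have hk : finrank K U ≠ 0 := fun h => hU (Submodule.finrank_eq_zero.1 h)
  have hkn := U.finrank_le
  rw [finrank_fintype_fun_eq_card] at hkn
  obtain ⟨S, -, hS⟩ := exists_subset_card_eq (s := (univ : Finset ι))
    (n := finrank K U - 1) (by rw [card_univ]; omega)
  obtain ⟨x, hxU, hx0, hxS⟩ := exists_mem_ne_zero_vanishingOn (U := U) (S := S) (by omega)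
  have := wt_add_card_le_of_mem_vanishingOn hxS
  exact ⟨x, hxU, hx0, by omega⟩

theorem hasMinDist.finrank_add_le {U : Submodule K (ι → K)} {d : ℕ} (h : hasMinDist U d) :
    finrank K U + d ≤ Fintype.card ι + 1 := by
  obtain ⟨⟨c, hc, hc0, -⟩, hd⟩ := h
  obtain ⟨x, hx, hx0, hwt⟩ :=
    exists_ne_zero_wt_add_finrank_le ((Submodule.ne_bot_iff U).2 ⟨c, hc, hc0⟩)
  have := hd x hx hx0
  omega

theorem hasMinDist_of_finrank_add_eq {U : Submodule K (ι → K)} {d : ℕ}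
    (hd : ∀ x ∈ U, x ≠ 0 → d ≤ wt x) (hU : finrank K U + d = Fintype.card ι + 1)
    (hdn : d ≤ Fintype.card ι) : hasMinDist U d := by
  have hne : U ≠ ⊥ := fun h => by rw [h, finrank_bot] at hU; omega
  obtain ⟨x, hx, hx0, hwt⟩ := exists_ne_zero_wt_add_finrank_le hne
  exact ⟨⟨x, hx, hx0, le_antisymm (by omega) (hd x hx hx0)⟩, hd⟩

/-- The dual of an MDS code is MDS. -/
theorem finrank_lt_wt_of_mem_dualCode {U : Submodule K (ι → K)}
    (hU : ∀ x ∈ U, x ≠ 0 → Fintype.card ι < finrank K U + wt x) {y : ι → K}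
    (hy : y ∈ dualCode U) (hy0 : y ≠ 0) : finrank K U < wt y := by
  classical
  by_contra! hwt
  have := card_zeroSet_add_wt y
  have := finrank_dualCode_add_finrank U
  obtain ⟨S, hSy, hS⟩ := exists_subset_card_eq (s := zeroSet y)
    (n := Fintype.card ι - finrank K U) (by omega)
  have hdim := finrank_inf_vanishingOn_add_card (U := dualCode U) (S := S) fun x hx hx0 => by
    rw [dualCode_dualCode] at hx
    have := hU x hx hx0
    omega
  have hbot : dualCode U ⊓ vanishingOn K S = ⊥ := Submodule.finrank_eq_zero.1 (by omega)
  have hyS : y ∈ dualCode U ⊓ vanishingOn K S :=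
    ⟨hy, mem_vanishingOn.2 fun i hi => mem_zeroSet.1 (hSy hi)⟩
  rw [hbot, Submodule.mem_bot] at hyS
  exact hy0 hyS

end Shortening

section SchurProduct

variable {K ι : Type*} [Field K]

theorem mul_mem_schurProd {A B : Submodule K (ι → K)} {a b : ι → K} (ha : a ∈ A) (hb : b ∈ B) :
    a * b ∈ schurProd A B :=
  Submodule.subset_span ⟨a, ha, b, hb, rfl⟩

theorem mul_mem_dualCode [Fintype ι] {B W : Submodule K (ι → K)} {a u : ι → K} (hu : u ∈ dualCode W)
    (h : ∀ b ∈ B, a * b ∈ W) : a * u ∈ dualCode B := fun b hb => by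
  simpa [mul_left_comm, mul_comm] using hu _ (h b hb)

theorem finrank_map_mulLeft [Fintype ι] [DecidableEq K] {X : Submodule K (ι → K)} {a : ι → K}
    (hX : ∀ x ∈ X, x ≠ 0 → #(zeroSet a) < wt x) :
    finrank K (X.map (LinearMap.mulLeft K a)) = finrank K X := by
  rw [← LinearMap.range_domRestrict]
  refine LinearMap.finrank_range_of_inj ((injective_iff_map_eq_zero _).2 fun x hx => ?_)
  by_contra hx0
  have h0 : a * (x : ι → K) = 0 := hx
  have := wt_le_wt_mul_add_card_zeroSet a x
  rw [h0, wt_zero, zero_add] at this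
  exact (hX x x.2 (by simpa using hx0)).not_ge this

theorem map_mulLeft_le_inf_vanishingOn [Fintype ι] [DecidableEq K] {X Y : Submodule K (ι → K)}
    {a : ι → K} (h : ∀ x ∈ X, a * x ∈ Y) :
    X.map (LinearMap.mulLeft K a) ≤ Y ⊓ vanishingOn K (zeroSet a) := by
  rintro _ ⟨x, hx, rfl⟩
  exact ⟨h x hx, mem_vanishingOn.2 fun i hi => by simp [mem_zeroSet.1 hi]⟩

end SchurProduct

section MDS

variable {K ι : Type*} [Field K] [Fintype ι] {ℓ : ℕ} {A : Submodule K (ι → K)}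

theorem exists_mem_zeroSet_eq [DecidableEq K] (hA : finrank K A = ℓ + 1)
    (hAd : ∀ a ∈ A, a ≠ 0 → Fintype.card ι - ℓ ≤ wt a) {S : Finset ι} (hS : #S = ℓ) :
    ∃ a ∈ A, zeroSet a = S := by
  obtain ⟨a, haA, ha0, haS⟩ := exists_mem_ne_zero_vanishingOn (U := A) (S := S) (by omega)
  have hsub : S ⊆ zeroSet a := fun i hi => mem_zeroSet.2 (mem_vanishingOn.1 haS i hi)
  refine ⟨a, haA, (eq_of_subset_of_card_le hsub ?_).symm⟩
  have := card_zeroSet_add_wt a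
  have := hAd a haA ha0
  have := card_le_univ S
  omega

/-- The `a ∈ A` vanishing on all but one point `i₀` of the support of `u` makes `a * u` a word of
weight one. -/
theorem add_two_le_wt_of_forall_mul_mem (hA : finrank K A = ℓ + 1)
    (hAd : ∀ a ∈ A, a ≠ 0 → Fintype.card ι - ℓ ≤ wt a) (hℓ : ℓ < Fintype.card ι)
    {M : Submodule K (ι → K)} (hM : ∀ x ∈ M, x ≠ 0 → 2 ≤ wt x) {u : ι → K}
    (hu : ∀ a ∈ A, a * u ∈ M) (hu0 : u ≠ 0) : ℓ + 2 ≤ wt u := by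
  classical
  by_contra! hwt
  obtain ⟨i₀, hi₀⟩ := Function.ne_iff.1 hu0
  have hsupp : #((univ.filter (u · ≠ 0)).erase i₀) ≤ ℓ := by
    rw [card_erase_of_mem (by simpa using hi₀), ← hammingNorm, ← wt_eq_hammingNorm]
    omega
  obtain ⟨S, hsuppS, hSi₀, hS⟩ := exists_subsuperset_card_eq
    (erase_subset_erase i₀ (subset_univ _)) hsupp
    (by rw [card_erase_of_mem (mem_univ _), card_univ]; omega)
  obtain ⟨a, haA, haS⟩ := exists_mem_zeroSet_eq hA hAd hS
  have hai₀ : a i₀ ≠ 0 := fun h =>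
    (mem_erase.1 (hSi₀ (haS ▸ mem_zeroSet.2 h))).1 rfl
  have hne : a * u ≠ 0 := fun h => mul_ne_zero hai₀ hi₀ (congrFun h i₀)
  have hwt1 : wt (a * u) ≤ 1 := by
    refine (wt_le_card_of_forall_notMem (s := {i₀}) fun i hi => ?_).trans (card_singleton _).le
    by_cases hui : u i = 0
    · simp [hui]
    · have : i ∈ zeroSet a := haS ▸ hsuppS (by simpa [hui] using hi)
      simp [mem_zeroSet.1 this]
  have := hM _ (hu a haA) hne
  omega

end MDS

section ErrorCorrectingPair

variable {K ι : Type*} [Field K] [Fintype ι] {ℓ : ℕ} {A B : Submodule K (ι → K)}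

theorem exists_mem_dualCode_wt_add_eq (hA : finrank K A = ℓ + 1)
    (hAd : ∀ a ∈ A, a ≠ 0 → Fintype.card ι - ℓ ≤ wt a) {D : Submodule K (ι → K)}
    (hAB : schurProd A B ≤ D) {c : ι → K} (hc : c ∈ dualCode D) (hℓ : ℓ ≤ wt c) :
    ∃ x ∈ dualCode B, wt x + ℓ = wt c := by
  classical
  obtain ⟨S, hSc, hS⟩ := exists_subset_card_eq (s := univ.filter (c · ≠ 0)) (n := ℓ)
    (by rwa [← hammingNorm, ← wt_eq_hammingNorm])
  obtain ⟨a, haA, rfl⟩ := exists_mem_zeroSet_eq hA hAd hS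
  refine ⟨a * c, mul_mem_dualCode hc fun b hb => hAB (mul_mem_schurProd haA hb), ?_⟩
  rw [← hS]
  exact wt_mul_add_card_zeroSet fun i hi => (mem_filter.1 (hSc (mem_zeroSet.2 hi))).2

theorem finrank_add_le_of_forall_mul_mem (hA : finrank K A = ℓ + 1)
    (hAd : ∀ a ∈ A, a ≠ 0 → Fintype.card ι - ℓ ≤ wt a) (hℓ : ℓ ≤ Fintype.card ι)
    {X Y : Submodule K (ι → K)} (hXY : ∀ a ∈ A, ∀ x ∈ X, a * x ∈ Y)
    (hX : ∀ x ∈ X, x ≠ 0 → ℓ < wt x) (hY : ∀ y ∈ dualCode Y, y ≠ 0 → ℓ < wt y) :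
    finrank K X + ℓ ≤ finrank K Y := by
  classical
  obtain ⟨S, -, hS⟩ := exists_subset_card_eq (s := (univ : Finset ι)) (n := ℓ)
    (by rwa [card_univ])
  obtain ⟨a, haA, rfl⟩ := exists_mem_zeroSet_eq hA hAd hS
  have := finrank_map_mulLeft (X := X) (a := a) (hS ▸ hX)
  have := Submodule.finrank_mono (map_mulLeft_le_inf_vanishingOn (hXY a haA))
  have := finrank_inf_vanishingOn_add_card (U := Y) (S := zeroSet a) (hS ▸ hY)
  omega

/-- A nonzero `x ∈ A * B` vanishing on `2ℓ` points is `a * b` with `a` vanishing on `ℓ` of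
them, which forces `b` to vanish on the other `ℓ`, too many for the MDS code `B`. -/
theorem sub_lt_wt_of_mem_schurProd (hA : finrank K A = ℓ + 1)
    (hAd : ∀ a ∈ A, a ≠ 0 → Fintype.card ι - ℓ ≤ wt a)
    (hB : ∀ b ∈ B, b ≠ 0 → Fintype.card ι - ℓ < wt b) (hBk : finrank K B = ℓ)
    (hWk : finrank K (schurProd A B) = 2 * ℓ)
    (hW : ∀ y ∈ dualCode (schurProd A B), y ≠ 0 → ℓ < wt y) {x : ι → K}
    (hx : x ∈ schurProd A B) (hx0 : x ≠ 0) : Fintype.card ι - 2 * ℓ < wt x := by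
  classical
  by_contra! hwt
  have := card_zeroSet_add_wt x
  have := wt_pos_iff.2 hx0
  obtain ⟨S, hSx, hS⟩ := exists_subset_card_eq (s := zeroSet x) (n := ℓ) (by omega)
  obtain ⟨a, haA, rfl⟩ := exists_mem_zeroSet_eq hA hAd hS
  have hBa : ∀ b ∈ B, b ≠ 0 → #(zeroSet a) < wt b := fun b hb hb0 => by
    have := hB b hb hb0
    omega
  have heq : B.map (LinearMap.mulLeft K a) = schurProd A B ⊓ vanishingOn K (zeroSet a) := by
    refine Submodule.eq_of_le_of_finrank_le
      (map_mulLeft_le_inf_vanishingOn fun b hb => mul_mem_schurProd haA hb) ?_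
    have := finrank_map_mulLeft hBa
    have := finrank_inf_vanishingOn_add_card (hS ▸ hW)
    omega
  have hxa : x ∈ B.map (LinearMap.mulLeft K a) :=
    heq ▸ ⟨hx, mem_vanishingOn.2 fun i hi => mem_zeroSet.1 (hSx hi)⟩
  obtain ⟨b, hb, rfl⟩ := hxa
  have hb0 : b ≠ 0 := by
    rintro rfl
    simp at hx0
  have := hB b hb hb0
  have := wt_le_wt_mul_add_card_zeroSet a b
  simp only [LinearMap.mulLeft_apply] at *
  omega

theorem hasMinDist_dualCode_of_hasMinDist (hA : finrank K A = ℓ + 1)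
    (hAd : ∀ a ∈ A, a ≠ 0 → Fintype.card ι - ℓ ≤ wt a) {D : Submodule K (ι → K)}
    (hAB : schurProd A B ≤ D) (hD : hasMinDist (dualCode D) (2 * ℓ + 1))
    (hB : ∃ d, hasMinDist (dualCode B) d ∧ ℓ < d) : hasMinDist (dualCode B) (ℓ + 1) := by
  obtain ⟨c, hc, -, hcwt⟩ := hD.1
  obtain ⟨x, hxB, hxwt⟩ := exists_mem_dualCode_wt_add_eq hA hAd hAB hc (by omega)
  obtain ⟨d, hBd, hd⟩ := hB
  have := hBd.2 x hxB (wt_pos_iff.1 (by omega))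
  rwa [show d = ℓ + 1 by omega] at hBd

theorem finrank_add_le_of_schurProd_le (hA : finrank K A = ℓ + 1)
    (hAd : ∀ a ∈ A, a ≠ 0 → Fintype.card ι - ℓ ≤ wt a) (hℓ : ℓ < Fintype.card ι)
    {D : Submodule K (ι → K)} (hAB : schurProd A B ≤ D) (hD : ∀ x ∈ D, x ≠ 0 → 2 ≤ wt x)
    (hDperp : ∀ y ∈ dualCode D, y ≠ 0 → ℓ < wt y) : finrank K B + ℓ ≤ finrank K D := by
  refine finrank_add_le_of_forall_mul_mem hA hAd hℓ.le
    (fun a ha b hb => hAB (mul_mem_schurProd ha hb)) (fun b hb hb0 => ?_) hDperp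
  have := add_two_le_wt_of_forall_mul_mem hA hAd hℓ hD
    (fun a ha => hAB (mul_mem_schurProd ha hb)) hb0
  omega

theorem schurProd_cases (hA : finrank K A = ℓ + 1)
    (hAd : ∀ a ∈ A, a ≠ 0 → Fintype.card ι - ℓ ≤ wt a) (hℓ : 1 ≤ ℓ)
    (hn : 2 * ℓ < Fintype.card ι) {D : Submodule K (ι → K)} (hAB : schurProd A B ≤ D)
    (hDk : finrank K D = 2 * ℓ + 1) (hBk : finrank K B = ℓ)
    (hBperp : hasMinDist (dualCode B) (ℓ + 1)) :
    (finrank K (schurProd A B) = 2 * ℓ ∧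
      hasMinDist (schurProd A B) (Fintype.card ι - 2 * ℓ + 1)) ∨ schurProd A B = D := by
  have := finrank_dualCode_add_finrank B
  have hB : ∀ b ∈ B, b ≠ 0 → Fintype.card ι - ℓ < wt b := fun b hb hb0 => by
    have := finrank_lt_wt_of_mem_dualCode (U := dualCode B)
      (fun y hy hy0 => by have := hBperp.2 y hy hy0; omega) (by rwa [dualCode_dualCode]) hb0
    omega
  have hW : ∀ y ∈ dualCode (schurProd A B), y ≠ 0 → ℓ + 2 ≤ wt y := fun y hy hy0 =>
    add_two_le_wt_of_forall_mul_mem hA hAd (by omega)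
      (fun x hx hx0 => by have := hBperp.2 x hx hx0; omega)
      (fun a ha => mul_mem_dualCode hy fun b hb => mul_mem_schurProd ha hb) hy0
  have := finrank_add_le_of_forall_mul_mem hA hAd (by omega)
    (X := dualCode (schurProd A B)) (Y := dualCode B)
    (fun a ha y hy => mul_mem_dualCode hy fun b hb => mul_mem_schurProd ha hb)
    (fun y hy hy0 => by have := hW y hy hy0; omega)
    (fun b hb hb0 => by rw [dualCode_dualCode] at hb; have := hB b hb hb0; omega)
  have := finrank_dualCode_add_finrank (schurProd A B)
  have := Submodule.finrank_mono hAB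
  obtain hW2 | hW1 : finrank K (schurProd A B) = 2 * ℓ ∨
      finrank K (schurProd A B) = 2 * ℓ + 1 := by omega
  · refine Or.inl ⟨hW2, hasMinDist_of_finrank_add_eq (fun x hx hx0 => ?_) (by omega) (by omega)⟩
    exact sub_lt_wt_of_mem_schurProd hA hAd hB hBk hW2
      (fun y hy hy0 => by have := hW y hy hy0; omega) hx hx0
  · exact Or.inr (Submodule.eq_of_le_of_finrank_le hAB (by omega))

end ErrorCorrectingPair

theorem nmds_odd_ecp_case_A1_general {Fq K : Type*} [Field Fq] [Field K] [Algebra Fq K]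
    {n ℓ : ℕ} (hl : 2 ≤ ℓ) (hn : 2 * ℓ < n - 3)
    (C : Submodule Fq (Fin n → Fq))
    (hCk : Module.finrank Fq C = n - 2 * ℓ - 1)
    (hCd : hasMinDist C (2 * ℓ + 1))
    (hCdual : hasMinDist (dualCode C) (n - 2 * ℓ - 1))
    (A B : Submodule K (Fin n → K))
    (hAB : schurProd A B ≤ dualCode (extendCode Fq K C))
    (hBperp : ∃ dB, hasMinDist (dualCode B) dB ∧ ℓ < dB)
    (hAk : Module.finrank K A = ℓ + 1)
    (hAd : hasMinDist A (n - ℓ)) :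
    (Module.finrank K (dualCode B) = n - ℓ - 1 ∧ hasMinDist (dualCode B) (ℓ + 1)) ∨
    (Module.finrank K (dualCode B) = n - ℓ ∧ hasMinDist (dualCode B) (ℓ + 1) ∧
      Module.finrank K (schurProd A B) = 2 * ℓ ∧
      hasMinDist (schurProd A B) (n - 2 * ℓ + 1)) ∨
    (Module.finrank K (dualCode B) = n - ℓ ∧ hasMinDist (dualCode B) (ℓ + 1) ∧
      schurProd A B = dualCode (extendCode Fq K C)) := by
  set E := extendCode Fq K C
  have hE : hasMinDist (dualCode (dualCode E)) (2 * ℓ + 1) := by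
    rw [dualCode_dualCode]
    exact hasMinDist_extendCode hCd
  have hD : hasMinDist (dualCode E) (n - 2 * ℓ - 1) := by
    rw [dualCode_extendCode]
    exact hasMinDist_extendCode hCdual
  have hDk : finrank K (dualCode E) = 2 * ℓ + 1 := by
    have := finrank_dualCode_add_finrank E
    rw [finrank_extendCode, hCk, Fintype.card_fin] at this
    omega
  have hAd' : ∀ a ∈ A, a ≠ 0 → Fintype.card (Fin n) - ℓ ≤ wt a := by simpa using hAd.2
  have hBperp' := hasMinDist_dualCode_of_hasMinDist hAk hAd' hAB hE hBperp
  have hBk := finrank_add_le_of_schurProd_le hAk hAd' (by rw [Fintype.card_fin]; omega) hAB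
    (fun x hx hx0 => by have := hD.2 x hx hx0; omega)
    (fun y hy hy0 => by have := hE.2 y hy hy0; omega)
  have hBsingleton := hBperp'.finrank_add_le
  have hBdual := finrank_dualCode_add_finrank B
  rw [Fintype.card_fin] at hBsingleton hBdual
  obtain hB1 | hBl : finrank K B = ℓ + 1 ∨ finrank K B = ℓ := by omega
  · exact Or.inl ⟨by omega, hBperp'⟩
  obtain ⟨hW, hWd⟩ | hWD :=
    schurProd_cases hAk hAd' (by omega) (by rw [Fintype.card_fin]; omega) hAB hDk hBl hBperp'
  · exact Or.inr (Or.inl ⟨by omega, hBperp', hW, by simpa using hWd⟩)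
  · exact Or.inr (Or.inr ⟨by omega, hBperp', hWD⟩)

/-- for an NMDS code `[n, n-2ℓ-1, 2ℓ+1]` with an `ℓ`-error-correcting pair
`(A, B)` where `A = [n, ℓ+1, n-ℓ]`, the parameters of `B^⊥` and `A*B` fall into
one of three cases. -/
theorem nmds_odd_ecp_case_A1 {Fq K : Type*} [Field Fq] [Fintype Fq] [Field K] [Algebra Fq K]
    {n ℓ : ℕ} (hl : 2 ≤ ℓ) (hn : 2 * ℓ < n - 3)
    (C : Submodule Fq (Fin n → Fq))
    (hCk : Module.finrank Fq C = n - 2 * ℓ - 1)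
    (hCd : hasMinDist C (2 * ℓ + 1))
    (hCdual : hasMinDist (dualCode C) (n - 2 * ℓ - 1))
    (A B : Submodule K (Fin n → K))
    (hAB : schurProd A B ≤ dualCode (extendCode Fq K C))
    (hBperp : ∃ dB, hasMinDist (dualCode B) dB ∧ ℓ < dB)
    (hAk : Module.finrank K A = ℓ + 1)
    (hAd : hasMinDist A (n - ℓ))
    (hEd : n < (n - ℓ) + (2 * ℓ + 1)) :
    (Module.finrank K (dualCode B) = n - ℓ - 1 ∧ hasMinDist (dualCode B) (ℓ + 1)) ∨
    (Module.finrank K (dualCode B) = n - ℓ ∧ hasMinDist (dualCode B) (ℓ + 1) ∧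
      Module.finrank K (schurProd A B) = 2 * ℓ ∧
      hasMinDist (schurProd A B) (n - 2 * ℓ + 1)) ∨
    (Module.finrank K (dualCode B) = n - ℓ ∧ hasMinDist (dualCode B) (ℓ + 1) ∧
      schurProd A B = dualCode (extendCode Fq K C)) :=
  nmds_odd_ecp_case_A1_general hl hn C hCk hCd hCdual A B hAB hBperp hAk hAd
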